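/- If G=(U,W,E) is a P_7-free bipartite graph, then its bipartite complement is also a P_7-free bipartite graph. -/

import Mathlib

universe u

/-- `X` is complete to `Y` in `G`: every vertex of `X` is adjacent to every vertex of `Y`. -/
def CompleteTo {V : Type u} (G : SimpleGraph V) (X Y : Set V) : Prop :=
  ∀ ⦃x⦄, x ∈ X → ∀ ⦃y⦄, y ∈ Y → G.Adj x y

/-- `X` is anticomplete to `Y` in `G`. -/
def AnticompleteTo {V : Type u} (G : SimpleGraph V) (X Y : Set V) : Prop :=
  ∀ ⦃x⦄, x ∈ X → ∀ ⦃y⦄, y ∈ Y → ¬ G.Adj x y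

/-- `(U, W)` is a bipartition of the vertex set of `G` into two independent sets. -/
structure IsBipartition {V : Type u} (G : SimpleGraph V) (U W : Set V) : Prop where
  union_eq : U ∪ W = Set.univ
  disjoint : Disjoint U W
  cross : ∀ ⦃x y⦄, G.Adj x y → (x ∈ U ∧ y ∈ W) ∨ (x ∈ W ∧ y ∈ U)

/-- `G` contains an induced subgraph isomorphic to `H`. -/
def HasInducedCopy {α : Type*} {V : Type u} (H : SimpleGraph α) (G : SimpleGraph V) : Prop :=
  ∃ f : α ↪ V, ∀ a b : α, G.Adj (f a) (f b) ↔ H.Adj a b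

/-- `G` has no induced subgraph isomorphic to the chordless path `P_m` on `m` vertices. -/
def PathFree (m : ℕ) {V : Type u} (G : SimpleGraph V) : Prop :=
  ¬ HasInducedCopy (SimpleGraph.pathGraph m) G

/-- `G` is bipartite: its vertex set can be partitioned into (at most) two independent sets. -/
def Bipartite {V : Type u} (G : SimpleGraph V) : Prop :=
  ∃ U W : Set V, IsBipartition G U W

/-- The bipartite complement of `G` with respect to the parts `U` and `W`:
`u ∈ U` and `w ∈ W` are adjacent iff they are non-adjacent in `G`. -/
def bipComplOn {V : Type u} (G : SimpleGraph V) (U W : Set V) : SimpleGraph V where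
  Adj x y := ((x ∈ U ∧ y ∈ W) ∨ (x ∈ W ∧ y ∈ U)) ∧ x ≠ y ∧ ¬ G.Adj x y
  symm := by
    constructor
    rintro x y ⟨h1, h2, h3⟩
    exact ⟨by tauto, h2.symm, fun h => h3 h.symm⟩
  loopless := by constructor; rintro x ⟨_, h, _⟩; exact h rfl

/-! Restricting to an induced subgraph commutes with taking the bipartite complement, and taking
the bipartite complement twice gives back a bipartite graph. Hence an induced `P₇` in the bipartite
complement of `G` yields in `G` an induced copy of the bipartite complement of `P₇` with respect
to its (unique) bipartition into even and odd vertices. That graph is again a `P₇`, namely the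
path `2 – 5 – 0 – 3 – 6 – 1 – 4`. -/

open SimpleGraph

theorem hasInducedCopy_iff_nonempty_embedding {α : Type*} {V : Type u} {H : SimpleGraph α}
    {G : SimpleGraph V} : HasInducedCopy H G ↔ Nonempty (H ↪g G) :=
  ⟨fun ⟨f, hf⟩ => ⟨⟨f, hf _ _⟩⟩, fun ⟨f⟩ => ⟨f.toEmbedding, fun _ _ => f.map_rel_iff⟩⟩

section Bipartition

variable {α : Type*} {V : Type u} {H : SimpleGraph α} {G : SimpleGraph V} {U W : Set V}

theorem IsBipartition.symm (h : IsBipartition G U W) : IsBipartition G W U :=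
  ⟨by rw [Set.union_comm, h.union_eq], h.disjoint.symm, fun _ _ hxy => (h.cross hxy).symm⟩

theorem IsBipartition.isCompl (h : IsBipartition G U W) : IsCompl U W :=
  ⟨h.disjoint, codisjoint_iff.mpr h.union_eq⟩

theorem IsBipartition.mem_iff_notMem_of_adj (h : IsBipartition G U W) {x y : V}
    (hxy : G.Adj x y) : y ∈ U ↔ x ∉ U := by
  rw [← h.isCompl.compl_eq] at h
  rcases h.cross hxy with ⟨hx, hy⟩ | ⟨hx, hy⟩ <;> simp_all

theorem IsBipartition.comap (h : IsBipartition G U W) (f : H →g G) :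
    IsBipartition H (f ⁻¹' U) (f ⁻¹' W) :=
  ⟨by rw [← Set.preimage_union, h.union_eq, Set.preimage_univ], h.disjoint.preimage f,
    fun _ _ hab => h.cross (f.map_adj hab)⟩

theorem IsBipartition.bipComplOn (h : IsBipartition G U W) :
    IsBipartition (bipComplOn G U W) U W :=
  ⟨h.union_eq, h.disjoint, fun _ _ hxy => hxy.1⟩

theorem bipComplOn_comm (G : SimpleGraph V) (U W : Set V) :
    bipComplOn G U W = bipComplOn G W U := by
  ext x y
  simp only [bipComplOn, or_comm]

theorem bipComplOn_bipComplOn (h : IsBipartition G U W) :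
    bipComplOn (bipComplOn G U W) U W = G := by
  ext x y
  constructor
  · rintro ⟨hparts, -, hnot⟩
    by_contra hG
    have hxy : x ≠ y := hparts.elim (fun hp => h.disjoint.ne_of_mem hp.1 hp.2)
      (fun hp => (h.disjoint.ne_of_mem hp.2 hp.1).symm)
    exact hnot ⟨hparts, hxy, hG⟩
  · intro hG
    exact ⟨h.cross hG, hG.ne, fun hc => hc.2.2 hG⟩

end Bipartition

def SimpleGraph.Embedding.bipComplOn {α : Type*} {V : Type u} {H : SimpleGraph α}
    {G : SimpleGraph V} (f : H ↪g G) (U W : Set V) :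
    _root_.bipComplOn H (f ⁻¹' U) (f ⁻¹' W) ↪g _root_.bipComplOn G U W where
  toEmbedding := f.toEmbedding
  map_rel_iff' :=
    and_congr_right' (and_congr (not_congr f.injective.eq_iff) (not_congr f.map_adj_iff))

theorem IsBipartition.pathGraph_mem_iff_even {n : ℕ} {A B : Set (Fin (n + 1))}
    (h : IsBipartition (pathGraph (n + 1)) A B)
    (h0 : 0 ∈ A) (i : Fin (n + 1)) : i ∈ A ↔ Even i.val := by
  induction i using Fin.induction with
  | zero => simpa using h0
  | succ i ih =>
    have hadj : (pathGraph (n + 1)).Adj i.castSucc i.succ := pathGraph_adj.mpr (by simp)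
    rw [h.mem_iff_notMem_of_adj hadj, ih, Fin.val_succ, Nat.even_add_one, Fin.val_castSucc]

def pathGraphSevenEmbedding :
    pathGraph 7 ↪g bipComplOn (pathGraph 7) {i | Even i.val} {i | Even i.val}ᶜ where
  toFun := ![2, 5, 0, 3, 6, 1, 4]
  inj' := by decide
  map_rel_iff' := by
    intro a b
    simp only [bipComplOn, pathGraph_adj, Set.mem_ofPred_eq, Set.mem_compl_iff,
      Function.Embedding.coeFn_mk]
    revert a b
    decide

theorem IsBipartition.nonempty_pathGraph_seven_embedding {A B : Set (Fin 7)}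
    (h : IsBipartition (pathGraph 7) A B) :
    Nonempty (pathGraph 7 ↪g _root_.bipComplOn (pathGraph 7) A B) := by
  wlog h0 : 0 ∈ A generalizing A B
  · rw [bipComplOn_comm]
    exact this h.symm (by rw [← h.isCompl.compl_eq]; exact h0)
  have hA : A = {i | Even i.val} := Set.ext (h.pathGraph_mem_iff_even h0)
  rw [← h.isCompl.compl_eq, hA]
  exact ⟨pathGraphSevenEmbedding⟩

/-- If `G = (U, W, E)` is a `P₇`-free bipartite graph, then its bipartite
complement is also a `P₇`-free bipartite graph. -/
theorem bipCompl_P7_free {V : Type u} (G : SimpleGraph V) (U W : Set V)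
    (hbip : IsBipartition G U W) (hP7 : PathFree 7 G) :
    IsBipartition (bipComplOn G U W) U W ∧ PathFree 7 (bipComplOn G U W) := by
  refine ⟨hbip.bipComplOn, fun hcopy => hP7 ?_⟩
  obtain ⟨f⟩ := hasInducedCopy_iff_nonempty_embedding.mp hcopy
  obtain ⟨e⟩ := (hbip.bipComplOn.comap f.toHom).nonempty_pathGraph_seven_embedding
  have g := f.bipComplOn U W
  rw [bipComplOn_bipComplOn hbip] at g
  exact hasInducedCopy_iff_nonempty_embedding.mpr ⟨e.trans g⟩
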